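/- Consider 2n agents with identical claims 1/(2n): n agents of group 1 with linear utility given by ν₁(F) = λ(F ∩ [0,1/2)) + (3/2)λ(F ∩ [1/2,3/4)) + (1/2)λ(F ∩ [3/4,1]) and n agents of group 2 with ν₂(F) = 2λ(F ∩ [1/2,1]). Let π = {A,B} with A = [0,1/2), B = [1/2,1]. Then: (a) unit prices on A and B together with the allocation giving each group-1 agent the bundle (1/(2n),0) and each group-2 agent the bundle (0,1/(2n)) form a competitive equilibrium of E(π), and the sum of all agents' equilibrium utilities equals 3/2; (b) for every classification ρ that refines π (every interval of ρ is contained in A or in B) and partitions B into at least two intervals of positive measure, every competitive equilibrium ⟨q,(y^i)⟩ of E(ρ) satisfies Σ_i V_i(ρ,y^i) < 3/2. -/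

import Mathlib

/-!
Part (a) is a direct computation. For part (b), suppose an equilibrium of `E(ρ)` has welfare at
least `3/2`. No agent values a part of `A` at density above `1` or a part of `B` above `2`, and
these bounds add up to `3/2`; so everything is allocated, group 1 holds exactly `A` and group 2
exactly `B`. Trading between parts on the same side shows that prices are constant on `A`, say
`q_A`, and on `B`, say `q_B`. Group 2 spends `q_B / 2` on `B` out of half the total wealth
`(q_A + q_B) / 2`, so `q_B ≤ q_A`, and then a group-1 agent would gain by trading `A` for any part
`C ⊆ B` with `ν₁ C > λ C`. Hence `ν₁ ≤ λ` on every part, with equality because both have total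
mass `1`; a part of `B` with `ν₁ C = λ C` has as much mass below `3/4` as above, so as an interval
it contains `3/4`, and two disjoint parts of `B` cannot both do so.
-/

open MeasureTheory Set
open scoped ENNReal Classical

noncomputable section

/-- Lebesgue measure of a set, as a real number. -/
def lvol (C : Set ℝ) : ℝ := (volume C).toReal

/-- Linear utility over tradable bundles: `V(π,x) = ∑_{C∈π} (x_C/λ(C)) ν(C)`,
where the evaluation of each commodity is given by the set function `νf`. -/
def Vlin (parts : Finset (Set ℝ)) (νf : Set ℝ → ℝ) (x : Set ℝ → ℝ) : ℝ :=
  ∑ C ∈ parts, (x C / lvol C) * νf C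

/-- Competitive equilibrium of the economy on the commodities `parts` with claims `κ`
and utilities `Vf` on tradable bundles. -/
def IsEqm {n : ℕ} (parts : Finset (Set ℝ)) (κ : Fin n → ℝ)
    (Vf : Fin n → (Set ℝ → ℝ) → ℝ) (p : Set ℝ → ℝ) (x : Fin n → Set ℝ → ℝ) : Prop :=
  (∀ C ∈ parts, 0 ≤ p C) ∧
  (∀ i, ∀ C ∈ parts, 0 ≤ x i C) ∧
  (∀ C ∈ parts, ∑ i, x i C ≤ lvol C) ∧
  (∀ i, ∑ C ∈ parts, p C * x i C ≤ κ i * ∑ C ∈ parts, p C * lvol C) ∧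
  (∀ i, ∀ y : Set ℝ → ℝ, (∀ C ∈ parts, 0 ≤ y C) → Vf i (x i) < Vf i y →
    κ i * ∑ C ∈ parts, p C * lvol C < ∑ C ∈ parts, p C * y C)

/-- A classification: a finite partition of `[0,1]` into intervals of positive
Lebesgue measure. -/
structure Classification where
  parts : Finset (Set ℝ)
  isInterval : ∀ C ∈ parts, C.OrdConnected
  posMeas : ∀ C ∈ parts, 0 < volume C
  pairwiseDisj : (parts : Set (Set ℝ)).PairwiseDisjoint id
  cover : ⋃₀ (parts : Set (Set ℝ)) = Set.Icc (0 : ℝ) 1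

namespace Stmt13

/-- Group 1's evaluation measure:
`ν₁(F) = λ(F ∩ [0,1/2)) + (3/2) λ(F ∩ [1/2,3/4)) + (1/2) λ(F ∩ [3/4,1])`. -/
def ν₁ (F : Set ℝ) : ℝ :=
  lvol (F ∩ Set.Ico 0 (1/2)) + (3/2) * lvol (F ∩ Set.Ico (1/2) (3/4)) +
    (1/2) * lvol (F ∩ Set.Icc (3/4) 1)

/-- Group 2's evaluation measure: `ν₂(F) = 2 λ(F ∩ [1/2,1])`. -/
def ν₂ (F : Set ℝ) : ℝ := 2 * lvol (F ∩ Set.Icc (1/2) 1)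

/-- The `2n` agents: the first `n` belong to group 1, the rest to group 2. -/
def νs (n : ℕ) : Fin (2 * n) → Set ℝ → ℝ := fun i => if (i : ℕ) < n then ν₁ else ν₂

/-- Identical claims `κᵢ = 1/(2n)`. -/
def κ (n : ℕ) : Fin (2 * n) → ℝ := fun _ => 1 / (2 * n)

def A : Set ℝ := Set.Ico 0 (1/2)
def B : Set ℝ := Set.Icc (1/2) 1

/-- The classification `π = {A,B}`. -/
def partsπ : Finset (Set ℝ) := {A, B}

/-- Each group-1 agent gets the bundle `(1/(2n),0)`, each group-2 agent `(0,1/(2n))`. -/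
def xs (n : ℕ) : Fin (2 * n) → Set ℝ → ℝ := fun i S =>
  if (i : ℕ) < n then (if S = A then 1 / (2 * n) else 0)
  else (if S = B then 1 / (2 * n) else 0)

end Stmt13

lemma lvol_empty : lvol ∅ = 0 := by simp [lvol]

lemma lvol_Ico {a b : ℝ} (h : a ≤ b) : lvol (Ico a b) = b - a := by
  rw [lvol, Real.volume_Ico, ENNReal.toReal_ofReal (sub_nonneg.2 h)]

lemma lvol_Icc {a b : ℝ} (h : a ≤ b) : lvol (Icc a b) = b - a := by
  rw [lvol, Real.volume_Icc, ENNReal.toReal_ofReal (sub_nonneg.2 h)]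

lemma lvol_nonneg (C : Set ℝ) : 0 ≤ lvol C := ENNReal.toReal_nonneg

lemma nonempty_of_lvol_pos {C : Set ℝ} (h : 0 < lvol C) : C.Nonempty :=
  nonempty_of_measure_ne_zero (μ := volume) fun h0 => by simp [lvol, h0] at h

lemma volume_ne_top_of_subset_Icc {C : Set ℝ} (h : C ⊆ Icc (0 : ℝ) 1) : volume C ≠ ⊤ :=
  measure_ne_top_of_subset h measure_Icc_lt_top.ne

lemma sum_ite_lt (n : ℕ) (c d : ℝ) :
    ∑ i : Fin (2 * n), (if (i : ℕ) < n then c else d) = n * c + n * d := by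
  rw [Fin.sum_univ_eq_sum_range (fun k => if k < n then c else d), two_mul, Finset.sum_range_add,
    Finset.sum_congr rfl fun k hk => if_pos (Finset.mem_range.1 hk),
    Finset.sum_congr rfl fun k _ => if_neg (by omega)]
  simp

section LinearUtility

variable {P : Finset (Set ℝ)} {νf : Set ℝ → ℝ}

lemma Vlin_add (x z : Set ℝ → ℝ) : Vlin P νf (x + z) = Vlin P νf x + Vlin P νf z := by
  simp only [Vlin, ← Finset.sum_add_distrib, Pi.add_apply, add_div, add_mul]

lemma Vlin_single {C : Set ℝ} (hC : C ∈ P) (t : ℝ) :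
    Vlin P νf (Pi.single C t) = t * (νf C / lvol C) := by
  rw [Vlin, Finset.sum_eq_single_of_mem C hC fun S _ hS => by simp [hS]]
  simp only [Pi.single_eq_same]
  ring

lemma sum_mul_single (p : Set ℝ → ℝ) {C : Set ℝ} (hC : C ∈ P) (t : ℝ) :
    ∑ S ∈ P, p S * (Pi.single C t : Set ℝ → ℝ) S = p C * t := by
  rw [Finset.sum_eq_single_of_mem C hC fun S _ hS => by simp [hS], Pi.single_eq_same]

lemma sum_Vlin_eq {ι : Type*} [Fintype ι] (ν x : ι → Set ℝ → ℝ) :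
    ∑ i, Vlin P (ν i) (x i) = ∑ C ∈ P, ∑ i, x i C * (ν i C / lvol C) := by
  unfold Vlin
  rw [Finset.sum_comm]
  simp only [div_mul_eq_mul_div, mul_div_assoc]

end LinearUtility

section Equilibrium

variable {m : ℕ} {P : Finset (Set ℝ)} {κ : Fin m → ℝ} {ν : Fin m → Set ℝ → ℝ}
  {p : Set ℝ → ℝ} {x : Fin m → Set ℝ → ℝ} {i : Fin m} {C C' : Set ℝ}

lemma IsEqm.price_pos (h : IsEqm P κ (fun i => Vlin P (ν i)) p x) (hC : C ∈ P)
    (hν : 0 < ν i C / lvol C) : 0 < p C := by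
  obtain ⟨hp, hx, -, hbudget, hopt⟩ := h
  refine (hp C hC).lt_of_ne' fun hpC => ?_
  have hbetter : Vlin P (ν i) (x i) < Vlin P (ν i) (x i + Pi.single C 1 : Set ℝ → ℝ) := by
    rw [Vlin_add, Vlin_single hC]
    linarith
  have hnn : ∀ S ∈ P, 0 ≤ (x i + Pi.single C 1 : Set ℝ → ℝ) S := fun S hS =>
    add_nonneg (hx i S hS) (by rw [Pi.single_apply]; split_ifs <;> norm_num)
  have hcost := hopt i _ hnn hbetter
  simp only [Pi.add_apply, mul_add, Finset.sum_add_distrib, sum_mul_single p hC, hpC] at hcost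
  linarith [hbudget i]

/-- Bang per buck: a holder of `C` cannot gain by selling it and buying `C'` with the proceeds. -/
lemma IsEqm.mul_density_le (h : IsEqm P κ (fun i => Vlin P (ν i)) p x) (hC : C ∈ P)
    (hC' : C' ∈ P) (hx : 0 < x i C) (hp' : 0 < p C') :
    p C * (ν i C' / lvol C') ≤ p C' * (ν i C / lvol C) := by
  rcases eq_or_ne C C' with rfl | hne
  · rw [mul_comm]
  obtain ⟨hp, hxnn, -, hbudget, hopt⟩ := h
  set t := x i C
  set s := p C * t / p C'
  set z : Set ℝ → ℝ := x i + Pi.single C (-t) + Pi.single C' s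
  have hs : 0 ≤ s := div_nonneg (mul_nonneg (hp C hC) hx.le) hp'.le
  have hnn : ∀ S ∈ P, 0 ≤ z S := by
    intro S hS
    rcases eq_or_ne S C with rfl | hSC
    · simp [z, t, hne]
    · have := hxnn i S hS
      simp only [z, Pi.add_apply, Pi.single_apply, hSC, if_false, add_zero]
      split_ifs <;> linarith
  have hcost : ∑ S ∈ P, p S * z S = ∑ S ∈ P, p S * x i S := by
    simp only [z, Pi.add_apply, mul_add, Finset.sum_add_distrib, sum_mul_single p hC,
      sum_mul_single p hC', s]
    field_simp
    ring
  by_contra! hlt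
  have hbetter : Vlin P (ν i) (x i) < Vlin P (ν i) z := by
    rw [Vlin_add, Vlin_add, Vlin_single hC, Vlin_single hC']
    have : t * (ν i C / lvol C) < s * (ν i C' / lvol C') := by
      rw [show s * (ν i C' / lvol C') = t * (p C * (ν i C' / lvol C') / p C') by ring]
      exact mul_lt_mul_of_pos_left ((lt_div_iff₀ hp').2 (by linarith)) hx
    linarith
  have := hopt i z hnn hbetter
  linarith [hbudget i]

lemma IsEqm.price_le_of_density_le (h : IsEqm P κ (fun i => Vlin P (ν i)) p x) (hC : C ∈ P)
    (hC' : C' ∈ P) (hx : 0 < x i C) (hpos : 0 < ν i C / lvol C)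
    (hle : ν i C / lvol C ≤ ν i C' / lvol C') : p C ≤ p C' := by
  have hp' := h.price_pos hC' (hpos.trans_le hle)
  have := h.mul_density_le hC hC' hx hp'
  have := mul_le_mul_of_nonneg_left hle (h.1 C hC)
  exact le_of_mul_le_mul_right (by linarith) hpos

end Equilibrium

/-- `∑ w a * c a` always bounds the welfare on the right of `h` from above, so `h` says that the
bound is attained. -/
lemma welfare_bound_attained {ι α : Type*} [Fintype ι] {P : Finset α} {x d : ι → α → ℝ}
    {w c : α → ℝ} (hx : ∀ i, ∀ a ∈ P, 0 ≤ x i a) (hc : ∀ a ∈ P, ∑ i, x i a ≤ c a)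
    (hd : ∀ i, ∀ a ∈ P, d i a ≤ w a) (hw : ∀ a ∈ P, 0 < w a)
    (h : ∑ a ∈ P, w a * c a ≤ ∑ a ∈ P, ∑ i, x i a * d i a) :
    (∀ i, ∀ a ∈ P, 0 < x i a → d i a = w a) ∧ ∀ a ∈ P, ∑ i, x i a = c a := by
  have hxd : ∀ a ∈ P, ∀ i, x i a * d i a ≤ x i a * w a := fun a ha i =>
    mul_le_mul_of_nonneg_left (hd i a ha) (hx i a ha)
  have h₁ : ∀ a ∈ P, ∑ i, x i a * d i a ≤ w a * ∑ i, x i a := fun a ha => by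
    rw [Finset.mul_sum]
    exact Finset.sum_le_sum fun i _ => (hxd a ha i).trans_eq (mul_comm _ _)
  have h₂ : ∀ a ∈ P, w a * ∑ i, x i a ≤ w a * c a := fun a ha =>
    mul_le_mul_of_nonneg_left (hc a ha) (hw a ha).le
  have e₁ := (Finset.sum_eq_sum_iff_of_le h₁).1
    (le_antisymm (Finset.sum_le_sum h₁) ((Finset.sum_le_sum h₂).trans h))
  have e₂ := (Finset.sum_eq_sum_iff_of_le h₂).1
    (le_antisymm (Finset.sum_le_sum h₂) (h.trans (Finset.sum_le_sum h₁)))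
  refine ⟨fun i a ha hxa => ?_, fun a ha => mul_left_cancel₀ (hw a ha).ne' (e₂ a ha)⟩
  have e : ∑ j, x j a * d j a = ∑ j, x j a * w a := by
    rw [e₁ a ha, Finset.mul_sum]
    simp only [mul_comm]
  exact mul_left_cancel₀ hxa.ne'
    ((Finset.sum_eq_sum_iff_of_le fun j _ => hxd a ha j).1 e i (Finset.mem_univ i))

namespace Classification

variable (ρ : Classification) {C : Set ℝ}

lemma subset_Icc (hC : C ∈ ρ.parts) : C ⊆ Icc 0 1 :=
  ρ.cover ▸ subset_sUnion_of_mem (Finset.mem_coe.2 hC)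

lemma lvol_pos (hC : C ∈ ρ.parts) : 0 < lvol C :=
  ENNReal.toReal_pos (ρ.posMeas C hC).ne' (volume_ne_top_of_subset_Icc (ρ.subset_Icc hC))

lemma nonempty (hC : C ∈ ρ.parts) : C.Nonempty :=
  nonempty_of_measure_ne_zero (ρ.posMeas C hC).ne'

lemma sum_lvol_inter {S : Set ℝ} (hS : MeasurableSet S) (hS01 : S ⊆ Icc 0 1) :
    ∑ C ∈ ρ.parts, lvol (C ∩ S) = lvol S := by
  have hU : ⋃ C ∈ ρ.parts, C ∩ S = S := by
    have hcover : ⋃ C ∈ ρ.parts, C = Icc 0 1 := by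
      rw [← ρ.cover, sUnion_eq_biUnion, Finset.set_biUnion_coe]
    rw [← iUnion₂_inter, hcover, inter_eq_right.2 hS01]
  show ∑ C ∈ ρ.parts, volume.real (C ∩ S) = volume.real S
  conv_rhs => rw [← hU]
  exact (measureReal_biUnion_finset
    (ρ.pairwiseDisj.mono fun C => inter_subset_left)
    (fun C hC => (ρ.isInterval C hC).measurableSet.inter hS)
    (fun C hC => volume_ne_top_of_subset_Icc (inter_subset_left.trans (ρ.subset_Icc hC)))).symm

lemma sum_lvol : ∑ C ∈ ρ.parts, lvol C = 1 := by
  have h := ρ.sum_lvol_inter measurableSet_Icc (subset_refl (Icc (0 : ℝ) 1))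
  rw [Finset.sum_congr rfl fun C hC => congrArg lvol (inter_eq_left.2 (ρ.subset_Icc hC)), lvol,
    Real.volume_Icc, sub_zero, ENNReal.toReal_ofReal zero_le_one] at h
  exact h

end Classification

namespace Stmt13

variable {C : Set ℝ}

lemma disjoint_A_B : Disjoint A B :=
  Set.disjoint_left.2 fun _ hA hB => not_le.2 hA.2 hB.1

lemma A_ne_B : A ≠ B := fun h => by
  have h0 : (0 : ℝ) ∈ B := h ▸ (⟨le_rfl, by norm_num⟩ : (0 : ℝ) ∈ A)
  norm_num [B] at h0

lemma A_subset_Icc : A ⊆ Icc 0 1 := Ico_subset_Icc_self.trans (Icc_subset_Icc_right (by norm_num))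

lemma B_subset_Icc : B ⊆ Icc 0 1 := Icc_subset_Icc_left (by norm_num)

lemma Ico_subset_B : Ico (1/2 : ℝ) (3/4) ⊆ B :=
  Ico_subset_Icc_self.trans (Icc_subset_Icc_right (by norm_num))

lemma Icc_subset_B : Icc (3/4 : ℝ) 1 ⊆ B := Icc_subset_Icc_left (by norm_num)

lemma lvol_A : lvol A = 1/2 := by
  rw [A, lvol_Ico (by norm_num)]; norm_num

lemma lvol_B : lvol B = 1/2 := by
  rw [B, lvol_Icc (by norm_num)]; norm_num

lemma inter_B_of_subset_A (h : C ⊆ A) : C ∩ B = ∅ := (disjoint_A_B.mono_left h).inter_eq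

lemma inter_A_of_subset_B (h : C ⊆ B) : C ∩ A = ∅ := (disjoint_A_B.symm.mono_left h).inter_eq

lemma ν₁_eq (F : Set ℝ) :
    ν₁ F = lvol (F ∩ A) + 3/2 * lvol (F ∩ Ico (1/2) (3/4)) + 1/2 * lvol (F ∩ Icc (3/4) 1) := rfl

lemma ν₂_eq (F : Set ℝ) : ν₂ F = 2 * lvol (F ∩ B) := rfl

lemma ν₁_of_subset_A (h : C ⊆ A) : ν₁ C = lvol C := by
  have hdisj := disjoint_A_B.mono_left h
  rw [ν₁_eq, inter_eq_left.2 h, (hdisj.mono_right Ico_subset_B).inter_eq,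
    (hdisj.mono_right Icc_subset_B).inter_eq, lvol_empty]
  ring

lemma ν₂_of_subset_A (h : C ⊆ A) : ν₂ C = 0 := by
  rw [ν₂_eq, inter_B_of_subset_A h, lvol_empty, mul_zero]

lemma ν₁_of_subset_B (h : C ⊆ B) :
    ν₁ C = 3/2 * lvol (C ∩ Ico (1/2) (3/4)) + 1/2 * lvol (C ∩ Icc (3/4) 1) := by
  rw [ν₁_eq, inter_A_of_subset_B h, lvol_empty, zero_add]

lemma ν₂_of_subset_B (h : C ⊆ B) : ν₂ C = 2 * lvol C := by
  rw [ν₂_eq, inter_eq_left.2 h]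

lemma lvol_eq_add_of_subset_B (h : C ⊆ B) (hm : MeasurableSet C) :
    lvol C = lvol (C ∩ Ico (1/2) (3/4)) + lvol (C ∩ Icc (3/4) 1) := by
  have hC : C ⊆ Icc 0 1 := h.trans B_subset_Icc
  have hsplit : C = (C ∩ Ico (1/2) (3/4)) ∪ (C ∩ Icc (3/4) 1) := by
    rw [← inter_union_distrib_left, Ico_union_Icc_eq_Icc (by norm_num) (by norm_num),
      show Icc (1/2 : ℝ) 1 = B from rfl, inter_eq_left.2 h]
  conv_lhs => rw [hsplit]
  exact measureReal_union
    ((disjoint_left.2 fun _ hx hy => not_le.2 hx.2 hy.1).mono inter_subset_right inter_subset_right)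
    (hm.inter measurableSet_Icc)
    (volume_ne_top_of_subset_Icc (inter_subset_left.trans hC))
    (volume_ne_top_of_subset_Icc (inter_subset_left.trans hC))

lemma ν₁_A : ν₁ A = 1/2 := by rw [ν₁_of_subset_A subset_rfl, lvol_A]

lemma ν₁_B : ν₁ B = 1/2 := by
  rw [ν₁_of_subset_B subset_rfl, inter_eq_right.2 Ico_subset_B, inter_eq_right.2 Icc_subset_B,
    lvol_Ico (by norm_num), lvol_Icc (by norm_num)]
  norm_num

lemma ν₂_A : ν₂ A = 0 := ν₂_of_subset_A subset_rfl

lemma ν₂_B : ν₂ B = 1 := by rw [ν₂_of_subset_B subset_rfl, lvol_B]; norm_num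

lemma xs_A (n : ℕ) (i : Fin (2 * n)) : xs n i A = if (i : ℕ) < n then 1 / (2 * (n : ℝ)) else 0 := by
  simp [xs, A_ne_B]

lemma xs_B (n : ℕ) (i : Fin (2 * n)) : xs n i B = if (i : ℕ) < n then 0 else 1 / (2 * (n : ℝ)) := by
  simp [xs, A_ne_B.symm]

lemma sum_partsπ (f : Set ℝ → ℝ) : ∑ C ∈ partsπ, f C = f A + f B := Finset.sum_pair A_ne_B

lemma Vlin_partsπ (νf x : Set ℝ → ℝ) : Vlin partsπ νf x = 2 * x A * νf A + 2 * x B * νf B := by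
  rw [Vlin, sum_partsπ, lvol_A, lvol_B]
  ring

lemma Vlin_xs (n : ℕ) (i : Fin (2 * n)) :
    Vlin partsπ (νs n i) (xs n i) = if (i : ℕ) < n then 1 / (2 * (n : ℝ)) else 1 / (n : ℝ) := by
  rw [Vlin_partsπ, xs_A, xs_B]
  by_cases h : (i : ℕ) < n <;> simp only [νs, h, if_true, if_false, ν₁_A, ν₁_B, ν₂_A, ν₂_B] <;>
    field_simp <;> ring

lemma isEqm_partsπ {n : ℕ} (hn : 0 < n) :
    IsEqm partsπ (κ n) (fun i => Vlin partsπ (νs n i)) (fun _ => 1) (xs n) := by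
  have hn' : (n : ℝ) ≠ 0 := by positivity
  have hwealth : ∑ C ∈ partsπ, (fun _ => (1 : ℝ)) C * lvol C = 1 := by
    rw [sum_partsπ, lvol_A, lvol_B]; norm_num
  refine ⟨fun _ _ => zero_le_one, fun i C _ => ?_, fun C hC => ?_, fun i => ?_,
    fun i z hz hbetter => ?_⟩
  · simp only [xs]
    split_ifs <;> positivity
  · obtain rfl | rfl : C = A ∨ C = B := by simpa [partsπ] using hC
    · simp only [xs_A, sum_ite_lt, lvol_A]
      field_simp
      norm_num
    · simp only [xs_B, sum_ite_lt, lvol_B]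
      field_simp
      norm_num
  · rw [hwealth, sum_partsπ, xs_A, xs_B, κ]
    split_ifs <;> simp
  · have hzA := hz A (by simp [partsπ])
    have hzB := hz B (by simp [partsπ])
    have hhalf : 1 / (n : ℝ) = 2 * (1 / (2 * n)) := by field_simp
    beta_reduce at hbetter ⊢
    rw [Vlin_xs, Vlin_partsπ] at hbetter
    rw [hwealth, sum_partsπ, κ, one_mul, one_mul, mul_one]
    by_cases h : (i : ℕ) < n <;>
      simp only [νs, h, if_true, if_false, ν₁_A, ν₁_B, ν₂_A, ν₂_B] at hbetter <;>
      linarith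

lemma welfare_xs {n : ℕ} (hn : 0 < n) : ∑ i, Vlin partsπ (νs n i) (xs n i) = 3/2 := by
  have hn' : (n : ℝ) ≠ 0 := by positivity
  simp only [Vlin_xs, sum_ite_lt]
  field_simp
  norm_num

lemma max_ν_eq (h : C ⊆ A ∨ C ⊆ B) (hm : MeasurableSet C) :
    max (ν₁ C) (ν₂ C) = lvol (C ∩ A) + 2 * lvol (C ∩ B) := by
  rcases h with hA | hB
  · rw [ν₁_of_subset_A hA, ν₂_of_subset_A hA, max_eq_left (lvol_nonneg C),
      inter_eq_left.2 hA, inter_B_of_subset_A hA, lvol_empty, mul_zero, add_zero]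
  · have hsplit := lvol_eq_add_of_subset_B hB hm
    have : ν₁ C ≤ ν₂ C := by
      rw [ν₁_of_subset_B hB, ν₂_of_subset_B hB]
      linarith [lvol_nonneg (C ∩ Ico (1/2) (3/4)), lvol_nonneg (C ∩ Icc (3/4) 1)]
    rw [max_eq_right this, ν₂_of_subset_B hB, inter_A_of_subset_B hB, inter_eq_left.2 hB,
      lvol_empty, zero_add]

lemma three_quarters_mem {ρ : Classification} (hC : C ∈ ρ.parts) (hB : C ⊆ B)
    (h : ν₁ C = lvol C) : 3/4 ∈ C := by
  have hsplit := lvol_eq_add_of_subset_B hB (ρ.isInterval C hC).measurableSet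
  rw [ν₁_of_subset_B hB] at h
  have hpos := ρ.lvol_pos hC
  obtain ⟨a, haC, ha⟩ := nonempty_of_lvol_pos (C := C ∩ Ico (1/2) (3/4)) (by linarith)
  obtain ⟨b, hbC, hb⟩ := nonempty_of_lvol_pos (C := C ∩ Icc (3/4) 1) (by linarith)
  exact (ρ.isInterval C hC).out haC hbC ⟨ha.2.le, hb.1⟩

lemma sum_ν₁ (ρ : Classification) : ∑ C ∈ ρ.parts, ν₁ C = 1 := by
  simp only [ν₁, Finset.sum_add_distrib, ← Finset.mul_sum]
  rw [ρ.sum_lvol_inter measurableSet_Ico A_subset_Icc,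
    ρ.sum_lvol_inter measurableSet_Ico (Ico_subset_B.trans B_subset_Icc),
    ρ.sum_lvol_inter measurableSet_Icc (Icc_subset_B.trans B_subset_Icc),
    lvol_Ico (by norm_num), lvol_Ico (by norm_num), lvol_Icc (by norm_num)]
  norm_num

variable {ρ : Classification}

lemma not_subset_A_of_subset_B (hC : C ∈ ρ.parts) (hB : C ⊆ B) : ¬ C ⊆ A := fun hA =>
  (ρ.nonempty hC).ne_empty (disjoint_self.1 (disjoint_A_B.mono hA hB))

lemma exists_part_subset_A (href : ∀ S ∈ ρ.parts, S ⊆ A ∨ S ⊆ B) : ∃ C ∈ ρ.parts, C ⊆ A := by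
  have h0 : (0 : ℝ) ∈ ⋃₀ (ρ.parts : Set (Set ℝ)) := by
    rw [ρ.cover]
    exact ⟨le_rfl, zero_le_one⟩
  obtain ⟨C, hC, h0⟩ := mem_sUnion.1 h0
  refine ⟨C, hC, (href C hC).resolve_right fun hB => ?_⟩
  have := (hB h0).1
  norm_num at this

lemma sum_max_ν (href : ∀ S ∈ ρ.parts, S ⊆ A ∨ S ⊆ B) :
    ∑ C ∈ ρ.parts, max (ν₁ C) (ν₂ C) = 3/2 := by
  rw [Finset.sum_congr rfl fun C hC => max_ν_eq (href C hC) (ρ.isInterval C hC).measurableSet,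
    Finset.sum_add_distrib, ← Finset.mul_sum,
    ρ.sum_lvol_inter (S := A) measurableSet_Ico A_subset_Icc,
    ρ.sum_lvol_inter (S := B) measurableSet_Icc B_subset_Icc, lvol_A, lvol_B]
  norm_num

/-- Since `ν₁` and `λ` both have total mass `1`, `ν₁ ≤ λ` on all parts forces `ν₁ = λ` on each,
and then every part of `B` contains `3/4`. -/
lemma eq_of_subset_B_of_ν₁_le (href : ∀ S ∈ ρ.parts, S ⊆ A ∨ S ⊆ B)
    (hν : ∀ C ∈ ρ.parts, C ⊆ B → ν₁ C ≤ lvol C) {C₁ C₂ : Set ℝ} (h₁ : C₁ ∈ ρ.parts)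
    (h₂ : C₂ ∈ ρ.parts) (hB₁ : C₁ ⊆ B) (hB₂ : C₂ ⊆ B) : C₁ = C₂ := by
  have hle : ∀ C ∈ ρ.parts, ν₁ C ≤ lvol C := fun C hC =>
    (href C hC).elim (fun hA => (ν₁_of_subset_A hA).le) (hν C hC)
  have heq := (Finset.sum_eq_sum_iff_of_le hle).1 (by rw [sum_ν₁, ρ.sum_lvol])
  by_contra hne
  exact disjoint_left.1 (ρ.pairwiseDisj h₁ h₂ hne) (three_quarters_mem h₁ hB₁ (heq C₁ h₁))
    (three_quarters_mem h₂ hB₂ (heq C₂ h₂))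

variable {n : ℕ} {q : Set ℝ → ℝ} {y : Fin (2 * n) → Set ℝ → ℝ}

lemma holders_of_welfare_ge (href : ∀ S ∈ ρ.parts, S ⊆ A ∨ S ⊆ B)
    (heqm : IsEqm ρ.parts (κ n) (fun i => Vlin ρ.parts (νs n i)) q y)
    (hwel : 3/2 ≤ ∑ i, Vlin ρ.parts (νs n i) (y i)) :
    (∀ i, ∀ C ∈ ρ.parts, 0 < y i C → ((i : ℕ) < n ↔ C ⊆ A)) ∧
      ∀ C ∈ ρ.parts, ∑ i, y i C = lvol C := by
  have hνs : ∀ i C, νs n i C ≤ max (ν₁ C) (ν₂ C) := fun i C => by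
    unfold νs
    split_ifs
    exacts [le_max_left _ _, le_max_right _ _]
  have hmax : ∀ C ∈ ρ.parts, 0 < max (ν₁ C) (ν₂ C) := fun C hC => by
    have hl := ρ.lvol_pos hC
    rcases href C hC with hA | hB
    · exact lt_max_of_lt_left (by rwa [ν₁_of_subset_A hA])
    · exact lt_max_of_lt_right (by rw [ν₂_of_subset_B hB]; linarith)
  obtain ⟨hdens, hfull⟩ := welfare_bound_attained (x := y) (d := fun i C => νs n i C / lvol C)
    (w := fun C => max (ν₁ C) (ν₂ C) / lvol C) (c := lvol) heqm.2.1 heqm.2.2.1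
    (fun i C _ => div_le_div_of_nonneg_right (hνs i C) (lvol_nonneg C))
    (fun C hC => div_pos (hmax C hC) (ρ.lvol_pos hC))
    (by rwa [← sum_Vlin_eq, Finset.sum_congr rfl fun C hC => div_mul_cancel₀ _ (ρ.lvol_pos hC).ne',
      sum_max_ν href])
  refine ⟨fun i C hC hy => ?_, hfull⟩
  have hi := (div_left_inj' (ρ.lvol_pos hC).ne').1 (hdens i C hC hy)
  have hl := ρ.lvol_pos hC
  rcases href C hC with hA | hB
  · refine iff_of_true (by_contra fun hin => ?_) hA
    simp only [νs, hin, if_false] at hi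
    have := le_max_left (ν₁ C) (ν₂ C)
    rw [← hi] at this
    rw [ν₁_of_subset_A hA, ν₂_of_subset_A hA] at this
    linarith
  · refine iff_of_false (fun hin => ?_) (not_subset_A_of_subset_B hC hB)
    simp only [νs, hin, if_true] at hi
    have := le_max_right (ν₁ C) (ν₂ C)
    rw [← hi] at this
    rw [ν₁_of_subset_B hB, ν₂_of_subset_B hB,
      lvol_eq_add_of_subset_B hB (ρ.isInterval C hC).measurableSet] at this
    rw [lvol_eq_add_of_subset_B hB (ρ.isInterval C hC).measurableSet] at hl
    linarith [lvol_nonneg (C ∩ Ico (1/2) (3/4)), lvol_nonneg (C ∩ Icc (3/4) 1)]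

lemma exists_holder (hfull : ∀ C ∈ ρ.parts, ∑ i, y i C = lvol C) (hC : C ∈ ρ.parts) :
    ∃ i, 0 < y i C := by
  obtain ⟨i, -, hi⟩ := Finset.exists_lt_of_sum_lt (s := Finset.univ) (f := fun _ => (0 : ℝ))
    (g := fun i => y i C) (by rw [Finset.sum_const_zero, hfull C hC]; exact ρ.lvol_pos hC)
  exact ⟨i, hi⟩

lemma νs_div_lvol (href : ∀ S ∈ ρ.parts, S ⊆ A ∨ S ⊆ B) (hC : C ∈ ρ.parts) {i : Fin (2 * n)}
    (hi : (i : ℕ) < n ↔ C ⊆ A) : νs n i C / lvol C = if C ⊆ A then 1 else 2 := by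
  have hl := (ρ.lvol_pos hC).ne'
  by_cases hA : C ⊆ A
  · rw [if_pos hA, νs, if_pos (hi.2 hA), ν₁_of_subset_A hA, div_self hl]
  · rw [if_neg hA, νs, if_neg (mt hi.1 hA), ν₂_of_subset_B ((href C hC).resolve_left hA),
      mul_div_assoc, div_self hl, mul_one]

lemma price_eq_of_same_side (href : ∀ S ∈ ρ.parts, S ⊆ A ∨ S ⊆ B)
    (heqm : IsEqm ρ.parts (κ n) (fun i => Vlin ρ.parts (νs n i)) q y)
    (hhold : ∀ i, ∀ C ∈ ρ.parts, 0 < y i C → ((i : ℕ) < n ↔ C ⊆ A))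
    (hfull : ∀ C ∈ ρ.parts, ∑ i, y i C = lvol C) {C C' : Set ℝ} (hC : C ∈ ρ.parts)
    (hC' : C' ∈ ρ.parts) (hside : C ⊆ A ↔ C' ⊆ A) : q C = q C' := by
  suffices key : ∀ C ∈ ρ.parts, ∀ C' ∈ ρ.parts, (C ⊆ A ↔ C' ⊆ A) → q C ≤ q C' from
    le_antisymm (key C hC C' hC' hside) (key C' hC' C hC hside.symm)
  intro C hC C' hC' hside
  obtain ⟨i, hi⟩ := exists_holder hfull hC
  have hiC := hhold i C hC hi
  have hd := νs_div_lvol href hC hiC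
  refine heqm.price_le_of_density_le hC hC' hi ?_
    (by rw [hd, νs_div_lvol href hC' (hiC.trans hside), hside])
  rw [hd]
  split_ifs <;> norm_num

lemma sum_spending_group₂_le (hn : 0 < n)
    (heqm : IsEqm ρ.parts (κ n) (fun i => Vlin ρ.parts (νs n i)) q y) :
    ∑ j ∈ Finset.univ.filter (fun j : Fin (2 * n) => ¬ (j : ℕ) < n), ∑ S ∈ ρ.parts, q S * y j S
      ≤ (∑ S ∈ ρ.parts, q S * lvol S) / 2 := by
  have hn' : (n : ℝ) ≠ 0 := by positivity
  calc _ ≤ ∑ j ∈ Finset.univ.filter (fun j : Fin (2 * n) => ¬ (j : ℕ) < n),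
          κ n j * ∑ S ∈ ρ.parts, q S * lvol S := Finset.sum_le_sum fun j _ => heqm.2.2.2.1 j
    _ = _ := by
      rw [Finset.sum_filter]
      simp only [ite_not, κ, sum_ite_lt]
      field_simp
      ring

lemma price_B_le_price_A (hn : 0 < n) (href : ∀ S ∈ ρ.parts, S ⊆ A ∨ S ⊆ B)
    (heqm : IsEqm ρ.parts (κ n) (fun i => Vlin ρ.parts (νs n i)) q y)
    (hhold : ∀ i, ∀ C ∈ ρ.parts, 0 < y i C → ((i : ℕ) < n ↔ C ⊆ A))
    (hfull : ∀ C ∈ ρ.parts, ∑ i, y i C = lvol C) {C₀ : Set ℝ} (hC₀ : C₀ ∈ ρ.parts)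
    (hA : C₀ ⊆ A) (hC : C ∈ ρ.parts) (hB : C ⊆ B) : q C ≤ q C₀ := by
  have hq : ∀ {S S'}, S ∈ ρ.parts → S' ∈ ρ.parts → (S ⊆ A ↔ S' ⊆ A) → q S = q S' :=
    fun hS hS' => price_eq_of_same_side href heqm hhold hfull hS hS'
  have hnotA : ∀ {S}, S ∈ ρ.parts → S ⊆ B → ¬ S ⊆ A := not_subset_A_of_subset_B
  have hvalue : ∀ S ∈ ρ.parts, q S * lvol S = q C₀ * lvol (S ∩ A) + q C * lvol (S ∩ B) := by
    intro S hS
    rcases href S hS with hSA | hSB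
    · rw [hq hS hC₀ (iff_of_true hSA hA), inter_eq_left.2 hSA, inter_B_of_subset_A hSA,
        lvol_empty]
      ring
    · rw [hq hS hC (iff_of_false (hnotA hS hSB) (hnotA hC hB)), inter_A_of_subset_B hSB,
        inter_eq_left.2 hSB, lvol_empty]
      ring
  have hwealth : ∑ S ∈ ρ.parts, q S * lvol S = q C₀ / 2 + q C / 2 := by
    rw [Finset.sum_congr rfl hvalue, Finset.sum_add_distrib, ← Finset.mul_sum, ← Finset.mul_sum,
      ρ.sum_lvol_inter (S := A) measurableSet_Ico A_subset_Icc,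
      ρ.sum_lvol_inter (S := B) measurableSet_Icc B_subset_Icc, lvol_A, lvol_B]
    ring
  -- group 2 owns all of `B`, but its budget is only half the wealth
  have hgroup₂ : ∀ S ∈ ρ.parts, q C * lvol (S ∩ B) ≤
      q S * ∑ j ∈ Finset.univ.filter (fun j : Fin (2 * n) => ¬ (j : ℕ) < n), y j S := by
    intro S hS
    rcases href S hS with hSA | hSB
    · rw [inter_B_of_subset_A hSA, lvol_empty, mul_zero]
      exact mul_nonneg (heqm.1 S hS) (Finset.sum_nonneg fun j _ => heqm.2.1 j S hS)
    · rw [Finset.sum_filter_of_ne (p := fun j : Fin (2 * n) => ¬ (j : ℕ) < n) fun j _ hy hj =>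
          hnotA hS hSB ((hhold j S hS ((heqm.2.1 j S hS).lt_of_ne' hy)).1 hj),
        hfull S hS, inter_eq_left.2 hSB, hq hS hC (iff_of_false (hnotA hS hSB) (hnotA hC hB))]
  have hspend := (Finset.sum_le_sum hgroup₂).trans_eq (by
    simp only [Finset.mul_sum]
    exact Finset.sum_comm)
  rw [← Finset.mul_sum, ρ.sum_lvol_inter (S := B) measurableSet_Icc B_subset_Icc, lvol_B] at hspend
  linarith [hspend.trans (sum_spending_group₂_le hn heqm)]

lemma ν₁_le_lvol_of_subset_B (hn : 0 < n) (href : ∀ S ∈ ρ.parts, S ⊆ A ∨ S ⊆ B)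
    (heqm : IsEqm ρ.parts (κ n) (fun i => Vlin ρ.parts (νs n i)) q y)
    (hhold : ∀ i, ∀ C ∈ ρ.parts, 0 < y i C → ((i : ℕ) < n ↔ C ⊆ A))
    (hfull : ∀ C ∈ ρ.parts, ∑ i, y i C = lvol C) (hC : C ∈ ρ.parts) (hB : C ⊆ B) :
    ν₁ C ≤ lvol C := by
  obtain ⟨C₀, hC₀, hA⟩ := exists_part_subset_A href
  obtain ⟨i, hi⟩ := exists_holder hfull hC₀
  obtain ⟨j, hj⟩ := exists_holder hfull hC
  have hiC₀ := hhold i C₀ hC₀ hi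
  have hjC := hhold j C hC hj
  have hqC : 0 < q C := heqm.price_pos hC (i := j) (by
    rw [νs_div_lvol href hC hjC, if_neg (not_subset_A_of_subset_B hC hB)]
    norm_num)
  have hle := price_B_le_price_A hn href heqm hhold hfull hC₀ hA hC hB
  have htrade := heqm.mul_density_le hC₀ hC hi hqC
  rw [νs_div_lvol href hC₀ hiC₀, if_pos hA, mul_one, νs, if_pos (hiC₀.2 hA)] at htrade
  have := le_of_mul_le_mul_left (htrade.trans (hle.trans_eq (mul_one _).symm)) (hqC.trans_le hle)
  rwa [div_le_one (ρ.lvol_pos hC)] at this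

/-- (a) unit prices and the allocation `xs` form a competitive
equilibrium of `E(π)`, and the sum of all agents' equilibrium utilities equals `3/2`;
(b) for every classification `ρ` refining `π` and splitting `B` into at least two
intervals, every competitive equilibrium of `E(ρ)` has total utility strictly
below `3/2`. -/
theorem refinement_not_welfare_improving (n : ℕ) (hn : 0 < n) :
    (IsEqm partsπ (κ n) (fun i => Vlin partsπ (νs n i)) (fun _ => 1) (xs n) ∧
      ∑ i, Vlin partsπ (νs n i) (xs n i) = 3/2) ∧
    (∀ ρ : Classification,
      (∀ S ∈ ρ.parts, S ⊆ A ∨ S ⊆ B) →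
      (∃ S₁ ∈ ρ.parts, ∃ S₂ ∈ ρ.parts, S₁ ≠ S₂ ∧ S₁ ⊆ B ∧ S₂ ⊆ B) →
      ∀ (q : Set ℝ → ℝ) (y : Fin (2 * n) → Set ℝ → ℝ),
        IsEqm ρ.parts (κ n) (fun i => Vlin ρ.parts (νs n i)) q y →
        ∑ i, Vlin ρ.parts (νs n i) (y i) < 3/2) := by
  refine ⟨⟨isEqm_partsπ hn, welfare_xs hn⟩, fun ρ href hsplit q y heqm => ?_⟩
  obtain ⟨S₁, h₁, S₂, h₂, hne, hB₁, hB₂⟩ := hsplit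
  by_contra! hwel
  obtain ⟨hhold, hfull⟩ := holders_of_welfare_ge href heqm hwel
  exact hne (eq_of_subset_B_of_ν₁_le href
    (fun C hC hB => ν₁_le_lvol_of_subset_B hn href heqm hhold hfull hC hB) h₁ h₂ hB₁ hB₂)

end Stmt13

end
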